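/- arXiv:math/0602425 — 5 statements merged into one kernel-verified Lean document; each statement's English description precedes it below -/
import Mathlib

section
/- For complex s with 3/4 < Re(s) < 1, the integral ∫_0^∞ J_0(2√t) t^{-s} dt converges absolutely and equals Γ(1-s)/Γ(s). -/
/-
With `y t = J0sq t` and `z t = t * y' t` (both entire power series), `y' = z / t` and `z' = -y`.
For these equations the function `(2 t y² + 2 z² + y z + y² / 4) / √t` is nonincreasing and
dominates `2 √t y²`, so `y = O(t^(-1/4))`; with `y` bounded near `0` this gives absolute
convergence of `∫ y t^(-s) dt` for `3/4 < Re s < 1`.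

Termwise integration gives the Laplace transform `∫ e^(-p t) y t dt = e^(-1/p) / p`. Integrating
`p^(s-1) e^(-p t) y t` over both variables in either order (Fubini) then yields
`Γ(s) ∫ y t^(-s) dt = ∫ p^(s-1) e^(-1/p) / p dp = Γ(1 - s)`.
-/

open MeasureTheory

/-- `J0sq t = J₀(2√t) = ∑ (-1)ⁿ tⁿ/(n!)²`. -/
noncomputable def J0sq (t : ℝ) : ℝ := ∑' n : ℕ, (-1)^n * t^n / ((Nat.factorial n : ℝ))^2

open Real Set Filter Nat Asymptotics Topology

section PowerSeries

variable {a : ℕ → ℝ}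

theorem summable_abs_mul_pow_of_abs_le_inv_factorial (ha : ∀ n, |a n| ≤ (n ! : ℝ)⁻¹)
    (r : ℝ) : Summable fun n => |a n| * r ^ n :=
  .of_norm_bounded (summable_pow_div_factorial |r|) fun n => by
    rw [norm_mul, norm_pow, norm_eq_abs, norm_eq_abs, abs_abs, div_eq_inv_mul]
    gcongr
    exact ha n

theorem summable_mul_pow_of_forall_summable_abs (ha : ∀ r, Summable fun n => |a n| * r ^ n)
    (x : ℝ) : Summable fun n => a n * x ^ n :=
  .of_norm_bounded (ha |x|) fun n => by rw [norm_mul, norm_pow, norm_eq_abs, norm_eq_abs]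

theorem hasDerivAt_tsum_mul_pow (ha : ∀ r, Summable fun n => |a n| * r ^ n) (x : ℝ) :
    HasDerivAt (fun x => ∑' n, a n * x ^ n) (∑' n, (n + 1) * a (n + 1) * x ^ n) x := by
  set R := |x| + 1
  have hR : 1 ≤ R := by simp [R]
  have hbound : ∀ n, ∀ y ∈ Ioo (-R) R, ‖a n * (n * y ^ (n - 1))‖ ≤ |a n| * (2 * R) ^ n := by
    intro n y hy
    have hy : |y| ≤ R := abs_le.2 ⟨hy.1.le, hy.2.le⟩
    rw [norm_mul, norm_mul, norm_pow, norm_eq_abs, norm_eq_abs, Nat.abs_cast, mul_pow]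
    gcongr
    · exact_mod_cast n.lt_two_pow_self.le
    · exact (pow_le_pow_left₀ (abs_nonneg y) hy _).trans (pow_le_pow_right₀ hR (n.sub_le 1))
  have hx : x ∈ Ioo (-R) R := ⟨by linarith [neg_abs_le x], by linarith [le_abs_self x]⟩
  have hderiv := hasDerivAt_tsum_of_isPreconnected (ha (2 * R)) isOpen_Ioo
    (convex_Ioo _ _).isPreconnected (fun n y _ => (hasDerivAt_pow n y).const_mul (a n))
    hbound hx (summable_mul_pow_of_forall_summable_abs ha x) hx
  refine hderiv.congr_deriv ?_
  rw [(Summable.of_norm_bounded (ha (2 * R)) fun n => hbound n x hx).tsum_eq_zero_add]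
  simp only [CharP.cast_eq_zero, zero_mul, mul_zero, zero_add, cast_succ, add_tsub_cancel_right]
  exact tsum_congr fun n => by ring

end PowerSeries

section Laplace

variable {p : ℝ}

theorem integrableOn_pow_mul_exp_neg_mul_Ioi (hp : 0 < p) (n : ℕ) :
    IntegrableOn (fun t => t ^ n * exp (-(p * t))) (Ioi 0) := by
  refine (integrableOn_rpow_mul_exp_neg_mul_rpow (s := n) (p := 1)
    (by linarith [n.cast_nonneg (α := ℝ)]) one_pos hp).congr_fun
    (fun t _ => ?_) measurableSet_Ioi
  simp [rpow_natCast]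

theorem integral_pow_mul_exp_neg_mul_Ioi (hp : 0 < p) (n : ℕ) :
    ∫ t in Ioi 0, t ^ n * exp (-(p * t)) = n ! / p ^ (n + 1) := by
  have h := integral_rpow_mul_exp_neg_mul_Ioi (a := n + 1) (by positivity) hp
  rw [add_sub_cancel_right, Gamma_nat_eq_factorial, ← cast_succ, rpow_natCast, div_pow, one_pow,
    one_div_mul_eq_div] at h
  rw [← h]
  exact setIntegral_congr_fun measurableSet_Ioi fun t _ => by simp [rpow_natCast]

theorem integral_exp_neg_mul_mul_tsum_mul_pow {a : ℕ → ℝ} (hp : 0 < p)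
    (ha : Summable fun n => |a n| * n ! / p ^ (n + 1)) :
    ∫ t in Ioi 0, exp (-(p * t)) * ∑' n, a n * t ^ n = ∑' n, a n * n ! / p ^ (n + 1) := by
  have hint (n : ℕ) := (integrableOn_pow_mul_exp_neg_mul_Ioi hp n).const_mul (a n)
  have hnorm (n : ℕ) :
      ∫ t in Ioi 0, ‖a n * (t ^ n * exp (-(p * t)))‖ = |a n| * n ! / p ^ (n + 1) := by
    rw [mul_div_assoc, ← integral_pow_mul_exp_neg_mul_Ioi hp n, ← integral_const_mul]
    refine setIntegral_congr_fun measurableSet_Ioi fun t (ht : 0 < t) => ?_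
    rw [norm_mul, norm_mul, norm_pow, norm_eq_abs, norm_eq_abs, norm_eq_abs, abs_of_pos ht,
      abs_of_pos (exp_pos _)]
  rw [← funext hnorm] at ha
  have hterm (t : ℝ) :
      exp (-(p * t)) * ∑' n, a n * t ^ n = ∑' n, a n * (t ^ n * exp (-(p * t))) := by
    rw [← tsum_mul_left]
    exact tsum_congr fun n => by ring
  simp_rw [hterm, ← integral_tsum_of_summable_integral_norm hint ha]
  refine tsum_congr fun n => ?_
  rw [integral_const_mul, integral_pow_mul_exp_neg_mul_Ioi hp n, mul_div_assoc]

end Laplace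

section MellinLaplace

variable {E : Type*} [NormedAddCommGroup E] [NormedSpace ℂ E] {s : ℂ}

theorem mellinConvergent_exp_neg_mul (hs : 0 < s.re) {t : ℝ} (ht : 0 < t) :
    MellinConvergent (fun p : ℝ => (rexp (-(p * t)) : ℂ)) s := by
  simp_rw [mul_comm _ t]
  refine (MellinConvergent.comp_mul_left (f := fun u : ℝ => (rexp (-u) : ℂ)) ht).2 ?_
  exact (Complex.GammaIntegral_convergent hs).congr_fun (fun u _ => by simp [mul_comm])
    measurableSet_Ioi

theorem mellin_exp_neg_mul (hs : 0 < s.re) {t : ℝ} (ht : 0 < t) :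
    mellin (fun p : ℝ => (rexp (-(p * t)) : ℂ)) s = (t : ℂ) ^ (-s) * Complex.Gamma s := by
  rw [mellin_comp_mul_right (fun u : ℝ => (rexp (-u) : ℂ)) s ht,
    ← Complex.GammaIntegral_eq_mellin, ← Complex.Gamma_eq_integral hs, smul_eq_mul]

theorem integral_norm_cpow_mul_exp_neg_mul (hs : 0 < s.re) {t : ℝ} (ht : 0 < t) :
    ∫ p : ℝ in Ioi 0, ‖(p : ℂ) ^ (s - 1) * rexp (-(p * t))‖ = Real.Gamma s.re * t ^ (-s.re) := by
  rw [rpow_neg ht.le, ← inv_rpow ht.le, ← one_div, mul_comm,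
    ← integral_rpow_mul_exp_neg_mul_Ioi hs ht]
  refine setIntegral_congr_fun measurableSet_Ioi fun p (hp : 0 < p) => ?_
  rw [norm_mul, Complex.norm_cpow_eq_rpow_re_of_pos hp, Complex.norm_real,
    norm_of_nonneg (exp_pos _).le, Complex.sub_re, Complex.one_re, mul_comm p]

theorem MellinConvergent.aestronglyMeasurable {f : ℝ → E} (hf : MellinConvergent f s) :
    AEStronglyMeasurable f (volume.restrict (Ioi 0)) := by
  have hpow : ContinuousOn (fun t : ℝ => (t : ℂ) ^ (1 - s)) (Ioi 0) := fun t (ht : 0 < t) =>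
    (Complex.continuousAt_ofReal_cpow_const _ _ (Or.inr ht.ne')).continuousWithinAt
  refine ((hpow.aestronglyMeasurable measurableSet_Ioi).smul hf.1).congr ?_
  filter_upwards [ae_restrict_mem measurableSet_Ioi] with t (ht : 0 < t)
  rw [Pi.smul_apply', smul_smul, ← Complex.cpow_add _ _ (Complex.ofReal_ne_zero.2 ht.ne')]
  simp

theorem integrable_mellin_laplace_kernel {f : ℝ → E} (hs : 0 < s.re)
    (hf : MellinConvergent f (1 - s)) :
    Integrable (Function.uncurry fun t p : ℝ => ((p : ℂ) ^ (s - 1) * rexp (-(p * t))) • f t)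
      ((volume.restrict (Ioi 0)).prod (volume.restrict (Ioi 0))) := by
  have hmeas : AEStronglyMeasurable
      (Function.uncurry fun t p : ℝ => ((p : ℂ) ^ (s - 1) * rexp (-(p * t))) • f t)
      ((volume.restrict (Ioi 0)).prod (volume.restrict (Ioi 0))) := by
    refine AEStronglyMeasurable.smul ?_ hf.aestronglyMeasurable.comp_fst
    rw [Measure.prod_restrict]
    refine ContinuousOn.aestronglyMeasurable ?_ (measurableSet_Ioi.prod measurableSet_Ioi)
    refine ContinuousOn.mul (fun q (hq : 0 < q.1 ∧ 0 < q.2) => ?_) (by fun_prop)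
    exact ((Complex.continuousAt_ofReal_cpow_const _ _ (Or.inr hq.2.ne')).comp
      continuous_snd.continuousAt).continuousWithinAt
  refine (integrable_prod_iff hmeas).2 ⟨?_, ?_⟩
  · filter_upwards [ae_restrict_mem measurableSet_Ioi] with t ht
    exact (mellinConvergent_exp_neg_mul hs ht).smul_const (f t)
  · refine (hf.norm.const_mul (Real.Gamma s.re)).congr ?_
    filter_upwards [ae_restrict_mem measurableSet_Ioi] with t (ht : 0 < t)
    simp only [Function.uncurry_apply_pair, norm_smul, integral_mul_const,
      integral_norm_cpow_mul_exp_neg_mul hs ht, Complex.norm_cpow_eq_rpow_re_of_pos ht,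
      sub_sub_cancel_left, Complex.neg_re]
    ring

theorem mellin_laplace_eq_Gamma_smul_mellin [CompleteSpace E] {f : ℝ → E} (hs : 0 < s.re)
    (hf : MellinConvergent f (1 - s)) :
    mellin (fun p => ∫ t in Ioi 0, rexp (-(p * t)) • f t) s
      = Complex.Gamma s • mellin f (1 - s) :=
  calc mellin (fun p => ∫ t in Ioi 0, rexp (-(p * t)) • f t) s
      = ∫ p : ℝ in Ioi 0, ∫ t : ℝ in Ioi 0, ((p : ℂ) ^ (s - 1) * rexp (-(p * t))) • f t := by
        refine setIntegral_congr_fun measurableSet_Ioi fun p _ => ?_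
        rw [← integral_smul]
        simp only [mul_smul, Complex.coe_smul]
    _ = ∫ t : ℝ in Ioi 0, ∫ p : ℝ in Ioi 0, ((p : ℂ) ^ (s - 1) * rexp (-(p * t))) • f t :=
        (integral_integral_swap (integrable_mellin_laplace_kernel hs hf)).symm
    _ = ∫ t : ℝ in Ioi 0, Complex.Gamma s • (t : ℂ) ^ (1 - s - 1) • f t := by
        refine setIntegral_congr_fun measurableSet_Ioi fun t (ht : 0 < t) => ?_
        rw [integral_smul_const, smul_smul, sub_sub_cancel_left, mul_comm (Complex.Gamma s)]
        exact congrArg (· • f t) (mellin_exp_neg_mul hs ht)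
    _ = Complex.Gamma s • mellin f (1 - s) := integral_smul _ _

theorem mellin_exp_neg_inv_div (hs : s.re < 1) :
    mellin (fun p : ℝ => ((rexp (-p⁻¹) / p : ℝ) : ℂ)) s = Complex.Gamma (1 - s) := by
  have hfun : (fun p : ℝ => ((rexp (-p⁻¹) / p : ℝ) : ℂ))
      = fun p : ℝ => (p : ℂ) ^ (-1 : ℂ) • ((fun u : ℝ => (rexp (-u) : ℂ)) p⁻¹) := by
    ext p
    simp [Complex.cpow_neg_one, div_eq_inv_mul]
  rw [hfun, mellin_cpow_smul, mellin_comp_inv (fun u : ℝ => (rexp (-u) : ℂ)),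
    ← Complex.GammaIntegral_eq_mellin, ← Complex.Gamma_eq_integral (by simp; linarith)]
  ring_nf

end MellinLaplace

section BesselLyapunov

variable {y z : ℝ → ℝ}

/-- For `x = 2√t` and `u x = y t`, `u' x = z t / √t`, this is
`x (u² + u'²) + u u' + u² / (2x)`, whose derivative along Bessel's equation
`u'' + u' / x + u = 0` is `-u² / (2x²)`. -/
noncomputable def besselLyapunov (y z : ℝ → ℝ) (t : ℝ) : ℝ :=
  (2 * t * y t ^ 2 + 2 * z t ^ 2 + y t * z t + y t ^ 2 / 4) / √t

theorem two_mul_sqrt_mul_sq_le_besselLyapunov {t : ℝ} (ht : 0 < t) :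
    2 * √t * y t ^ 2 ≤ besselLyapunov y z t := by
  have hs : 0 < √t := sqrt_pos.2 ht
  rw [besselLyapunov, le_div_iff₀ hs, mul_right_comm, mul_assoc 2, mul_self_sqrt ht.le]
  nlinarith [sq_nonneg (z t + y t / 4), sq_nonneg (y t)]

variable (hy : ∀ t > 0, HasDerivAt y (z t / t) t) (hz : ∀ t > 0, HasDerivAt z (-y t) t)
include hy hz

theorem hasDerivAt_besselLyapunov {t : ℝ} (ht : 0 < t) :
    HasDerivAt (besselLyapunov y z) (-(y t ^ 2) / (8 * t * √t)) t := by
  have hN : HasDerivAt (fun u => 2 * u * y u ^ 2 + 2 * z u ^ 2 + y u * z u + y u ^ 2 / 4)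
      (y t ^ 2 + z t ^ 2 / t + y t * z t / (2 * t)) t := by
    refine (((((hasDerivAt_id' t).const_mul 2).mul ((hy t ht).pow 2)).add
      (((hz t ht).pow 2).const_mul 2)).add ((hy t ht).mul (hz t ht)) |>.add
      ((hy t ht).pow 2 |>.div_const 4)).congr_deriv ?_
    simp only [Pi.pow_apply]
    field_simp
    ring
  have hV := hN.fun_div (hasDerivAt_sqrt ht.ne') (sqrt_pos.2 ht).ne'
  refine hV.congr_deriv ?_
  have hs : 0 < √t := sqrt_pos.2 ht
  field_simp
  rw [sq_sqrt ht.le]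
  ring

theorem antitoneOn_besselLyapunov : AntitoneOn (besselLyapunov y z) (Ioi 0) := by
  have hderiv {t : ℝ} (ht : t ∈ Ioi 0) := hasDerivAt_besselLyapunov hy hz ht
  refine antitoneOn_of_hasDerivWithinAt_nonpos (f' := fun t => -(y t ^ 2) / (8 * t * √t))
    (convex_Ioi 0)
    (fun t ht => (hderiv ht).continuousAt.continuousWithinAt) ?_ ?_
  · rw [interior_Ioi]
    exact fun t ht => (hderiv ht).hasDerivWithinAt
  · rw [interior_Ioi]
    intro t (ht : 0 < t)
    exact div_nonpos_of_nonpos_of_nonneg (neg_nonpos.2 (sq_nonneg _)) (by positivity)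

theorem isBigO_rpow_neg_one_div_four_of_hasDerivAt : y =O[atTop] (· ^ (-(1 / 4) : ℝ)) := by
  refine .of_pow two_ne_zero (.of_bound (besselLyapunov y z 1 / 2) ?_)
  filter_upwards [eventually_ge_atTop 1] with t ht
  have ht0 : 0 < t := one_pos.trans_le ht
  have hV : 2 * √t * y t ^ 2 ≤ besselLyapunov y z 1 :=
    (two_mul_sqrt_mul_sq_le_besselLyapunov ht0).trans
      (antitoneOn_besselLyapunov hy hz (mem_Ioi.2 one_pos) ht0 ht)
  have hpow : (t ^ (-(1 / 4) : ℝ)) ^ 2 = (√t)⁻¹ := by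
    rw [← rpow_natCast, ← rpow_mul ht0.le, sqrt_eq_rpow, ← rpow_neg ht0.le]
    norm_num
  simp only [Pi.pow_apply, norm_pow, norm_eq_abs, sq_abs, hpow, abs_inv,
    abs_of_pos (sqrt_pos.2 ht0)]
  rw [← div_eq_mul_inv, le_div_iff₀ (sqrt_pos.2 ht0)]
  linarith

end BesselLyapunov

noncomputable def j0Coeff (n : ℕ) : ℝ := (-1) ^ n / (n ! : ℝ) ^ 2

noncomputable def eulerJ0sq (t : ℝ) : ℝ := ∑' n, n * j0Coeff n * t ^ n

theorem J0sq_eq_tsum : J0sq = fun t => ∑' n, j0Coeff n * t ^ n :=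
  funext fun t => tsum_congr fun n => by rw [j0Coeff]; ring

theorem abs_natCast_mul_j0Coeff_le {k n : ℕ} (hk : k ≤ n !) :
    |k * j0Coeff n| ≤ (n ! : ℝ)⁻¹ := by
  have hn : (0 : ℝ) < n ! := by positivity
  rw [j0Coeff, abs_mul, abs_div, abs_pow, abs_neg, abs_one, one_pow, Nat.abs_cast,
    abs_of_pos (by positivity), mul_one_div, div_le_iff₀ (by positivity), sq, ← mul_assoc,
    inv_mul_cancel₀ hn.ne', one_mul]
  exact_mod_cast hk

theorem summable_abs_j0Coeff_mul_pow (r : ℝ) : Summable fun n => |j0Coeff n| * r ^ n :=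
  summable_abs_mul_pow_of_abs_le_inv_factorial (fun n => by
    simpa using abs_natCast_mul_j0Coeff_le (one_le_iff_ne_zero.2 n.factorial_ne_zero)) r

theorem summable_abs_natCast_mul_j0Coeff_mul_pow (r : ℝ) :
    Summable fun n => |n * j0Coeff n| * r ^ n :=
  summable_abs_mul_pow_of_abs_le_inv_factorial
    (fun n => abs_natCast_mul_j0Coeff_le n.self_le_factorial) r

theorem j0Coeff_succ (n : ℕ) : (n + 1) * ((n + 1 : ℕ) * j0Coeff (n + 1)) = -j0Coeff n := by
  rw [j0Coeff, j0Coeff, factorial_succ]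
  push_cast
  field_simp
  ring

theorem continuous_J0sq : Continuous J0sq := by
  rw [J0sq_eq_tsum]
  exact continuous_iff_continuousAt.2 fun t =>
    (hasDerivAt_tsum_mul_pow summable_abs_j0Coeff_mul_pow t).continuousAt

theorem hasDerivAt_J0sq {t : ℝ} (ht : t ≠ 0) : HasDerivAt J0sq (eulerJ0sq t / t) t := by
  rw [J0sq_eq_tsum]
  refine (hasDerivAt_tsum_mul_pow summable_abs_j0Coeff_mul_pow t).congr_deriv ?_
  rw [eq_div_iff ht, eulerJ0sq, (summable_mul_pow_of_forall_summable_abs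
    summable_abs_natCast_mul_j0Coeff_mul_pow t).tsum_eq_zero_add, ← tsum_mul_right]
  simp only [CharP.cast_eq_zero, zero_mul, zero_add, cast_succ, pow_succ]
  exact tsum_congr fun n => by ring

theorem hasDerivAt_eulerJ0sq (t : ℝ) : HasDerivAt eulerJ0sq (-J0sq t) t := by
  refine (hasDerivAt_tsum_mul_pow summable_abs_natCast_mul_j0Coeff_mul_pow t).congr_deriv ?_
  rw [J0sq_eq_tsum, ← tsum_neg]
  exact tsum_congr fun n => by rw [← neg_mul, ← j0Coeff_succ]

theorem integral_exp_neg_mul_mul_J0sq {p : ℝ} (hp : 0 < p) :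
    ∫ t in Ioi 0, exp (-(p * t)) * J0sq t = exp (-p⁻¹) / p := by
  have hcoeff (n : ℕ) : j0Coeff n * n ! / p ^ (n + 1) = (-p⁻¹) ^ n / n ! * p⁻¹ := by
    rw [j0Coeff, neg_pow p⁻¹, inv_pow]
    field_simp
    ring
  have habs (n : ℕ) : |j0Coeff n| * n ! / p ^ (n + 1) = p⁻¹ ^ n / n ! * p⁻¹ := by
    rw [j0Coeff, abs_div, abs_pow, abs_neg, abs_one, one_pow, abs_of_pos (by positivity),
      inv_pow]
    field_simp
    ring
  rw [J0sq_eq_tsum, integral_exp_neg_mul_mul_tsum_mul_pow hp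
    (by simpa only [habs] using (summable_pow_div_factorial p⁻¹).mul_right p⁻¹)]
  have hexp : HasSum (fun n => (-p⁻¹) ^ n / n !) (exp (-p⁻¹)) := by
    rw [exp_eq_exp_ℝ]
    exact NormedSpace.expSeries_div_hasSum_exp _
  simp only [hcoeff]
  rw [tsum_mul_right, hexp.tsum_eq, div_eq_mul_inv]

theorem mellinConvergent_J0sq {s : ℂ} (h1 : 3 / 4 < s.re) (h2 : s.re < 1) :
    MellinConvergent (fun t => (J0sq t : ℂ)) (1 - s) := by
  have hdecay : J0sq =O[atTop] (· ^ (-(1 / 4) : ℝ)) :=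
    isBigO_rpow_neg_one_div_four_of_hasDerivAt (fun t ht => hasDerivAt_J0sq ht.ne')
      (fun t _ => hasDerivAt_eulerJ0sq t)
  have hbounded : J0sq =O[𝓝[>] 0] (· ^ (-0 : ℝ)) := by
    simp only [neg_zero, rpow_zero]
    exact ((continuous_J0sq.tendsto 0).isBigO_one ℝ).mono nhdsWithin_le_nhds
  refine mellinConvergent_of_isBigO_rpow
    ((Complex.continuous_ofReal.comp continuous_J0sq).locallyIntegrable.locallyIntegrableOn _)
    (Complex.isBigO_ofReal_left.2 hdecay) ?_ (Complex.isBigO_ofReal_left.2 hbounded) ?_ <;>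
  simp <;> linarith

theorem mellin_laplace_J0sq {s : ℂ} (hs : s.re < 1) :
    mellin (fun p => ∫ t in Ioi 0, rexp (-(p * t)) • (J0sq t : ℂ)) s
      = Complex.Gamma (1 - s) := by
  rw [← mellin_exp_neg_inv_div hs]
  refine setIntegral_congr_fun measurableSet_Ioi fun p (hp : 0 < p) => ?_
  simp_rw [Complex.real_smul, ← Complex.ofReal_mul, integral_complex_ofReal,
    integral_exp_neg_mul_mul_J0sq hp]

theorem mellin_J0_eq_gamma_ratio (s : ℂ) (h1 : 3/4 < s.re) (h2 : s.re < 1) :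
    IntegrableOn (fun t : ℝ => (J0sq t : ℂ) * (t : ℂ) ^ (-s)) (Set.Ioi 0) ∧
    ∫ t in Set.Ioi (0:ℝ), (J0sq t : ℂ) * (t : ℂ) ^ (-s)
      = Complex.Gamma (1 - s) / Complex.Gamma s := by
  have hconv := mellinConvergent_J0sq h1 h2
  have hlaplace := mellin_laplace_eq_Gamma_smul_mellin (by linarith) hconv
  rw [mellin_laplace_J0sq h2, smul_eq_mul] at hlaplace
  have hintegrand : (fun t : ℝ => (J0sq t : ℂ) * (t : ℂ) ^ (-s))
      = fun t : ℝ => (t : ℂ) ^ (1 - s - 1) • (J0sq t : ℂ) := by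
    ext t
    rw [sub_sub_cancel_left, smul_eq_mul, mul_comm]
  rw [hintegrand]
  refine ⟨hconv, ?_⟩
  rw [eq_div_iff (Complex.Gamma_ne_zero_of_re_pos (by linarith)), hlaplace, mul_comm]
  rfl
end

section
/- For all a, b ≥ 0 and x ≥ 0: (a+b) J_1(2√((a+b)x))/√((a+b)x) = a J_1(2√(ax))/√(ax) + b J_1(2√(bx))/√(bx) − ∫_0^x (a J_1(2√(ay))/√(ay)) · (b J_1(2√(b(x−y)))/√(b(x−y))) dy, where the expressions are interpreted via the entire power series c J_1(2√(cu))/√(cu) = ∑_{n≥0} (-1)^n c^{n+1} u^n/(n!(n+1)!). -/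
open MeasureTheory intervalIntegral

/-- `j1 c u = c J₁(2√(cu))/√(cu) = ∑ (-1)ⁿ cⁿ⁺¹ uⁿ/(n!(n+1)!)`. -/
noncomputable def j1 (c u : ℝ) : ℝ :=
  ∑' n : ℕ, (-1)^n * c^(n+1) * u^n / ((Nat.factorial n : ℝ) * (Nat.factorial (n+1) : ℝ))

/-! Since `u ^ k / k !` has Laplace transform `s⁻¹ ^ (k + 1)`, that of `j1 c` is
`1 - exp (-c / s)`, and convolution becomes multiplication. The formula is therefore the Laplace
inversion of `(1 - e^{-a/s}) (1 - e^{-b/s}) = (1 - e^{-a/s}) + (1 - e^{-b/s}) - (1 - e^{-(a+b)/s})`.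
Concretely: multiply the two series as a Cauchy product, integrate it termwise (dominated
convergence, the terms being bounded by an exponential series), evaluate each term by the beta
integral `∫₀ˣ y^k/k! (x-y)^l/l! dy = x^(k+l+1)/(k+l+1)!`, and regroup by the binomial
theorem. -/

open Finset
open scoped Nat

theorem add_pow_div_factorial {K : Type*} [Field K] [CharZero K] (a b : K) (n : ℕ) :
    (a + b) ^ n / n ! = ∑ p ∈ antidiagonal n, a ^ p.1 / p.1 ! * (b ^ p.2 / p.2 !) := by
  rw [(Commute.all a b).add_pow', sum_div]
  refine sum_congr rfl fun p hp => ?_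
  rw [← mem_antidiagonal.mp hp, nsmul_eq_mul, Nat.cast_add_choose]
  have := (Nat.factorial_pos (p.1 + p.2)).ne'
  field_simp

theorem sum_antidiagonal_pow_succ_div_factorial {K : Type*} [Field K] [CharZero K] (a b : K)
    (n : ℕ) :
    ∑ p ∈ antidiagonal n, a ^ (p.1 + 1) / (p.1 + 1)! * (b ^ (p.2 + 1) / (p.2 + 1)!) =
      ((a + b) ^ (n + 2) - a ^ (n + 2) - b ^ (n + 2)) / (n + 2)! := by
  rw [sub_div, sub_div, add_pow_div_factorial, Nat.sum_antidiagonal_succ,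
    Nat.sum_antidiagonal_succ']
  simp only [pow_zero, Nat.factorial_zero, Nat.cast_one, div_one, one_mul, mul_one]
  ring

theorem integral_pow_div_factorial_mul_sub_pow_div_factorial (x : ℝ) (m n : ℕ) :
    ∫ y in (0:ℝ)..x, y ^ m / m ! * ((x - y) ^ n / n !) = x ^ (m + n + 1) / (m + n + 1)! := by
  induction n generalizing m with
  | zero =>
    simp only [pow_zero, Nat.factorial_zero, Nat.cast_one, div_one, mul_one, add_zero,
      intervalIntegral.integral_div, integral_pow, Nat.factorial_succ, Nat.cast_mul]
    field_simp
    push_cast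
    ring
  | succ n ih =>
    have hu : ∀ y ∈ Set.uIcc 0 x,
        HasDerivAt (fun y => (x - y) ^ (n + 1) / (n + 1)!) (-((x - y) ^ n / n !)) y := by
      intro y _
      refine ((((hasDerivAt_id y).const_sub x).pow (n + 1)).div_const _).congr_deriv ?_
      rw [Nat.factorial_succ, Nat.cast_mul]
      have := (Nat.factorial_pos n).ne'
      field_simp
      simp only [id_eq, add_tsub_cancel_right]
    have hv : ∀ y ∈ Set.uIcc 0 x,
        HasDerivAt (fun y : ℝ => y ^ (m + 1) / (m + 1)!) (y ^ m / m !) y := by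
      intro y _
      refine ((hasDerivAt_pow (m + 1) y).div_const _).congr_deriv ?_
      rw [Nat.factorial_succ, Nat.cast_mul]
      have := (Nat.factorial_pos m).ne'
      field_simp
      simp only [add_tsub_cancel_right]
    have hparts := integral_mul_deriv_eq_deriv_mul hu hv
      (by apply Continuous.intervalIntegrable; fun_prop)
      (by apply Continuous.intervalIntegrable; fun_prop)
    simp only [sub_self, zero_pow (Nat.succ_ne_zero _), zero_div, zero_mul, mul_zero, sub_zero,
      neg_mul, intervalIntegral.integral_neg, zero_sub, neg_neg] at hparts
    rw [show m + (n + 1) + 1 = m + 1 + n + 1 by ring, ← ih (m + 1)]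
    simp_rw [mul_comm (_ ^ m / _), mul_comm (_ ^ (m + 1) / _)]
    exact hparts

noncomputable def j1Term (c : ℝ) (n : ℕ) (u : ℝ) : ℝ :=
  (-1) ^ n * (c ^ (n + 1) / (n + 1)!) * (u ^ n / n !)

theorem abs_j1Term_le (c : ℝ) {u R : ℝ} (hu : |u| ≤ R) (n : ℕ) :
    |j1Term c n u| ≤ |c| * ((|c| * R) ^ n / n !) := by
  rw [j1Term, abs_mul, abs_mul, abs_pow, abs_neg, abs_one, one_pow, one_mul, abs_div, abs_div,
    abs_pow, abs_pow, Nat.abs_cast, Nat.abs_cast]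
  calc |c| ^ (n + 1) / (n + 1)! * (|u| ^ n / n !) ≤ |c| ^ (n + 1) * (R ^ n / n !) := by
        gcongr
        exact div_le_self (by positivity) (mod_cast Nat.one_le_of_lt (Nat.factorial_pos _))
    _ = |c| * ((|c| * R) ^ n / n !) := by ring

theorem summable_norm_j1Term (c u : ℝ) : Summable fun n => ‖j1Term c n u‖ :=
  .of_nonneg_of_le (fun _ => norm_nonneg _) (abs_j1Term_le c le_rfl)
    ((Real.summable_pow_div_factorial _).mul_left _)

theorem hasSum_j1Term (c u : ℝ) : HasSum (fun n => j1Term c n u) (j1 c u) := by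
  have h := (summable_norm_j1Term c u).of_norm.hasSum
  rwa [show ∑' n, j1Term c n u = j1 c u from tsum_congr fun n => by rw [j1Term]; ring] at h

theorem hasSum_sum_antidiagonal_j1Term_mul (a b y z : ℝ) :
    HasSum (fun n => ∑ p ∈ antidiagonal n, j1Term a p.1 y * j1Term b p.2 z)
      (j1 a y * j1 b z) := by
  have ha := summable_norm_j1Term a y
  have hb := summable_norm_j1Term b z
  rw [← (hasSum_j1Term a y).tsum_eq, ← (hasSum_j1Term b z).tsum_eq,
    tsum_mul_tsum_eq_tsum_sum_antidiagonal_of_summable_norm ha hb]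
  exact (summable_norm_sum_mul_antidiagonal_of_summable_norm ha hb).of_norm.hasSum

theorem abs_sum_antidiagonal_j1Term_mul_le (a b : ℝ) {y z R : ℝ} (hy : |y| ≤ R) (hz : |z| ≤ R)
    (n : ℕ) :
    |∑ p ∈ antidiagonal n, j1Term a p.1 y * j1Term b p.2 z| ≤
      |a| * |b| * (((|a| + |b|) * R) ^ n / n !) :=
  calc _ ≤ ∑ p ∈ antidiagonal n,
          |a| * ((|a| * R) ^ p.1 / p.1 !) * (|b| * ((|b| * R) ^ p.2 / p.2 !)) := by
        refine (abs_sum_le_sum_abs _ _).trans (sum_le_sum fun p _ => ?_)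
        rw [abs_mul]
        exact mul_le_mul (abs_j1Term_le a hy _) (abs_j1Term_le b hz _) (abs_nonneg _)
          ((abs_nonneg _).trans (abs_j1Term_le a hy _))
    _ = _ := by
        rw [add_mul, add_pow_div_factorial, mul_sum]
        exact sum_congr rfl fun p _ => by ring

theorem integral_j1Term_mul_j1Term (a b x : ℝ) (k l : ℕ) :
    ∫ y in (0:ℝ)..x, j1Term a k y * j1Term b l (x - y) =
      (-1) ^ (k + l) * (a ^ (k + 1) / (k + 1)! * (b ^ (l + 1) / (l + 1)!)) *
        (x ^ (k + l + 1) / (k + l + 1)!) := by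
  simp only [j1Term]
  rw [← integral_pow_div_factorial_mul_sub_pow_div_factorial,
    ← intervalIntegral.integral_const_mul]
  exact intervalIntegral.integral_congr fun y _ => by ring

theorem sum_antidiagonal_integral_j1Term_mul_j1Term (a b x : ℝ) (n : ℕ) :
    ∑ p ∈ antidiagonal n, ∫ y in (0:ℝ)..x, j1Term a p.1 y * j1Term b p.2 (x - y) =
      j1Term a (n + 1) x + j1Term b (n + 1) x - j1Term (a + b) (n + 1) x := by
  rw [sum_congr rfl fun p hp => by rw [integral_j1Term_mul_j1Term, mem_antidiagonal.mp hp],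
    ← sum_mul, ← mul_sum, sum_antidiagonal_pow_succ_div_factorial]
  simp only [j1Term]
  ring

theorem hasSum_integral_j1_mul_j1 (a b x : ℝ) :
    HasSum (fun n => j1Term a (n + 1) x + j1Term b (n + 1) x - j1Term (a + b) (n + 1) x)
      (∫ y in (0:ℝ)..x, j1 a y * j1 b (x - y)) := by
  have hcont : ∀ k l, Continuous fun y => j1Term a k y * j1Term b l (x - y) := by
    intro k l; simp only [j1Term]; fun_prop
  simp_rw [← sum_antidiagonal_integral_j1Term_mul_j1Term,
    ← intervalIntegral.integral_finsetSum fun (p : ℕ × ℕ) _ =>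
      (hcont p.1 p.2).intervalIntegrable 0 x]
  refine intervalIntegral.hasSum_integral_of_dominated_convergence
    (fun n _ => |a| * |b| * (((|a| + |b|) * |x|) ^ n / n !))
    (fun n => (continuous_finsetSum _ fun p _ => hcont p.1 p.2).aestronglyMeasurable)
    (fun n => ae_of_all _ fun y hy => ?_)
    (ae_of_all _ fun _ _ => (Real.summable_pow_div_factorial _).mul_left _)
    intervalIntegrable_const
    (ae_of_all _ fun y _ => hasSum_sum_antidiagonal_j1Term_mul a b y (x - y))
  have hy' := Set.uIoc_subset_uIcc hy
  refine abs_sum_antidiagonal_j1Term_mul_le a b ?_ ?_ n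
  · simpa using Set.abs_sub_left_of_mem_uIcc hy'
  · simpa using Set.abs_sub_right_of_mem_uIcc hy'

theorem j1_addition_formula_general (a b x : ℝ) :
    j1 (a + b) x = j1 a x + j1 b x - ∫ y in (0:ℝ)..x, j1 a y * j1 b (x - y) := by
  have hseries := ((hasSum_j1Term a x).add (hasSum_j1Term b x)).sub (hasSum_j1Term (a + b) x)
  rw [← hasSum_nat_add_iff' 1] at hseries
  have hzero : j1Term a 0 x + j1Term b 0 x - j1Term (a + b) 0 x = 0 := by simp [j1Term]
  simp only [sum_range_one, hzero, sub_zero] at hseries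
  linarith [(hasSum_integral_j1_mul_j1 a b x).unique hseries]

theorem j1_addition_formula (a b x : ℝ) (ha : 0 ≤ a) (hb : 0 ≤ b) (hx : 0 ≤ x) :
    j1 (a + b) x = j1 a x + j1 b x - ∫ y in (0:ℝ)..x, j1 a y * j1 b (x - y) :=
  j1_addition_formula_general a b x
end

section
/- For all a, b and x (as entire functions): J_0(2√((a+b)x)) = J_0(2√(ax)) − ∫_0^x J_0(2√(ay)) · (b J_1(2√(b(x−y)))/√(b(x−y))) dy. -/
open MeasureTheory

/-- `J0c u = J₀(2√u) = ∑ (-1)ⁿ uⁿ/(n!)²` (entire). -/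
noncomputable def J0c (u : ℂ) : ℂ := ∑' n : ℕ, (-1)^n * u^n / ((Nat.factorial n : ℂ))^2

/-- `j1c c u = c J₁(2√(cu))/√(cu) = ∑ (-1)ⁿ cⁿ⁺¹ uⁿ/(n!(n+1)!)` (entire). -/
noncomputable def j1c (c u : ℂ) : ℂ :=
  ∑' n : ℕ, (-1)^n * c^(n+1) * u^n / ((Nat.factorial n : ℂ) * (Nat.factorial (n+1) : ℂ))

/-! Expand both factors of the integrand in powers of `t` and `1 - t`, integrate term by term
with the Beta integral `∫₀¹ tʲ (1-t)ᵐ dt = j! m! / (j+m+1)!`, and collect the terms of total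
degree `K + 1` in `x`: they add up, by the binomial theorem, to the coefficient of `x^(K+1)` in
`J₀(2√(ax)) - J₀(2√((a+b)x))`. -/

open Finset Nat

theorem HasSum.sum_antidiagonal {α : Type*} [AddCommMonoid α] [TopologicalSpace α]
    [ContinuousAdd α] [RegularSpace α] {f : ℕ × ℕ → α} {s : α} (h : HasSum f s) :
    HasSum (fun n ↦ ∑ p ∈ antidiagonal n, f p) s := by
  refine (HasAntidiagonal.sigmaAntidiagonalEquivProd.hasSum_iff.2 h).sigma fun n ↦ ?_
  exact (antidiagonal n).hasSum f

theorem add_pow_succ_sub_pow_succ {R : Type*} [CommRing R] (a b : R) (K : ℕ) :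
    (a + b) ^ (K + 1) - a ^ (K + 1)
      = ∑ p ∈ antidiagonal K, ((K + 1).choose p.1 : R) * a ^ p.1 * b ^ (p.2 + 1) := by
  rw [(Commute.all a b).add_pow', Nat.sum_antidiagonal_succ']
  simp [nsmul_eq_mul, mul_assoc]

theorem integral_ofReal_pow_mul_one_sub_pow (n m : ℕ) :
    ∫ t in (0:ℝ)..1, (t : ℂ) ^ n * (1 - (t : ℂ)) ^ m = n ! * m ! / (n + m + 1)! := by
  have hbeta : ∫ t in (0:ℝ)..1, (t : ℂ) ^ n * (1 - (t : ℂ)) ^ m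
      = Complex.betaIntegral (n + 1) (m + 1) := by
    refine intervalIntegral.integral_congr fun t _ ↦ ?_
    simp only [add_sub_cancel_right, Complex.cpow_natCast]
  have hGamma := Complex.Gamma_mul_Gamma_eq_betaIntegral
    (s := (n : ℂ) + 1) (t := (m : ℂ) + 1) (by simp; positivity) (by simp; positivity)
  have hsum : (n : ℂ) + 1 + ((m : ℂ) + 1) = ((n + m + 1 : ℕ) : ℂ) + 1 := by push_cast; ring
  rw [hsum, Complex.Gamma_nat_eq_factorial, Complex.Gamma_nat_eq_factorial,
    Complex.Gamma_nat_eq_factorial] at hGamma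
  rw [hbeta, eq_div_iff (Nat.cast_ne_zero.2 (factorial_ne_zero _)), hGamma, mul_comm]

theorem norm_ofReal_le_one_of_mem_Ioc {t : ℝ} (ht : t ∈ Set.Ioc 0 1) :
    ‖(t : ℂ)‖ ≤ 1 ∧ ‖1 - (t : ℂ)‖ ≤ 1 := by
  have h1 : (1 - (t : ℂ)) = ((1 - t : ℝ) : ℂ) := by push_cast; ring
  rw [h1, Complex.norm_real, Complex.norm_real, Real.norm_of_nonneg ht.1.le,
    Real.norm_of_nonneg (by linarith [ht.2])]
  constructor <;> linarith [ht.1, ht.2]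

theorem summable_norm_mul_pow_of_norm_le_one {f : ℕ → ℂ} (hf : Summable (‖f ·‖)) {z : ℂ}
    (hz : ‖z‖ ≤ 1) : Summable fun n ↦ ‖f n * z ^ n‖ :=
  hf.of_nonneg_of_le (fun _ ↦ norm_nonneg _) fun n ↦ by
    rw [norm_mul, norm_pow]
    exact mul_le_of_le_one_right (norm_nonneg _) (pow_le_one₀ (norm_nonneg _) hz)

theorem hasSum_integral_tsum_mul_pow_mul_tsum_mul_one_sub_pow {f g : ℕ → ℂ}
    (hf : Summable (‖f ·‖)) (hg : Summable (‖g ·‖)) :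
    HasSum (fun p : ℕ × ℕ ↦ f p.1 * g p.2 * (p.1 ! * p.2 ! / (p.1 + p.2 + 1)! : ℂ))
      (∫ t in (0:ℝ)..1, (∑' n, f n * (t : ℂ) ^ n) * ∑' m, g m * (1 - (t : ℂ)) ^ m) := by
  have hterm (p : ℕ × ℕ) : ∫ t in (0:ℝ)..1, f p.1 * (t : ℂ) ^ p.1 * (g p.2 * (1 - (t : ℂ)) ^ p.2)
      = f p.1 * g p.2 * (p.1 ! * p.2 ! / (p.1 + p.2 + 1)! : ℂ) := by
    rw [← integral_ofReal_pow_mul_one_sub_pow, ← intervalIntegral.integral_const_mul]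
    exact intervalIntegral.integral_congr fun t _ ↦ by ring
  simp only [← hterm]
  have hunit : Set.uIoc (0:ℝ) 1 = Set.Ioc 0 1 := Set.uIoc_of_le zero_le_one
  refine intervalIntegral.hasSum_integral_of_dominated_convergence
    (fun p _ ↦ ‖f p.1‖ * ‖g p.2‖) (fun p ↦ by fun_prop) (fun p ↦ .of_forall fun t ht ↦ ?_)
    (.of_forall fun _ _ ↦ hf.mul_of_nonneg hg (fun _ ↦ norm_nonneg _) fun _ ↦ norm_nonneg _)
    intervalIntegrable_const (.of_forall fun t ht ↦ ?_)
  · rw [hunit] at ht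
    obtain ⟨ht, ht'⟩ := norm_ofReal_le_one_of_mem_Ioc ht
    rw [norm_mul, norm_mul, norm_mul, norm_pow, norm_pow]
    gcongr
    · exact mul_le_of_le_one_right (norm_nonneg _) (pow_le_one₀ (norm_nonneg _) ht)
    · exact mul_le_of_le_one_right (norm_nonneg _) (pow_le_one₀ (norm_nonneg _) ht')
  · rw [hunit] at ht
    obtain ⟨ht, ht'⟩ := norm_ofReal_le_one_of_mem_Ioc ht
    have h1 := summable_norm_mul_pow_of_norm_le_one hf ht
    have h2 := summable_norm_mul_pow_of_norm_le_one hg ht'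
    rw [tsum_mul_tsum_of_summable_norm h1 h2]
    exact (summable_mul_of_summable_norm h1 h2).hasSum

noncomputable def J0coeff (u : ℂ) (n : ℕ) : ℂ := (-1) ^ n * u ^ n / (n ! : ℂ) ^ 2

noncomputable def j1coeff (c u : ℂ) (n : ℕ) : ℂ :=
  (-1) ^ n * c ^ (n + 1) * u ^ n / ((n ! : ℂ) * ((n + 1)! : ℂ))

theorem J0coeff_zero (u : ℂ) : J0coeff u 0 = 1 := by
  simp [J0coeff]

theorem J0coeff_mul (u t : ℂ) (n : ℕ) : J0coeff (u * t) n = J0coeff u n * t ^ n := by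
  simp only [J0coeff]; ring

theorem j1coeff_mul (c u t : ℂ) (n : ℕ) : j1coeff c (t * u) n = j1coeff c u n * t ^ n := by
  simp only [j1coeff]; ring

theorem J0c_mul (u t : ℂ) : J0c (u * t) = ∑' n, J0coeff u n * t ^ n :=
  tsum_congr (J0coeff_mul u t)

theorem j1c_mul (c u t : ℂ) : j1c c (t * u) = ∑' n, j1coeff c u n * t ^ n :=
  tsum_congr (j1coeff_mul c u t)

theorem summable_norm_J0coeff (u : ℂ) : Summable fun n ↦ ‖J0coeff u n‖ := by
  refine (Real.summable_pow_div_factorial ‖u‖).of_nonneg_of_le (fun _ ↦ norm_nonneg _) fun n ↦ ?_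
  have hn : (1 : ℝ) ≤ n ! := mod_cast n.factorial_pos
  simp only [J0coeff, norm_div, norm_mul, norm_pow, norm_neg, norm_one, one_pow, one_mul,
    Complex.norm_natCast]
  gcongr
  exact le_self_pow₀ hn two_ne_zero

theorem summable_norm_j1coeff (c u : ℂ) : Summable fun n ↦ ‖j1coeff c u n‖ := by
  refine ((Real.summable_pow_div_factorial (‖c‖ * ‖u‖)).mul_left ‖c‖).of_nonneg_of_le
    (fun _ ↦ norm_nonneg _) fun n ↦ ?_
  have hn : (1 : ℝ) ≤ (n + 1)! := mod_cast (n + 1).factorial_pos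
  have hnorm : ‖j1coeff c u n‖ = ‖c‖ * ((‖c‖ * ‖u‖) ^ n / (n ! * (n + 1)!)) := by
    simp only [j1coeff, norm_div, norm_mul, norm_pow, norm_neg, norm_one, one_pow, one_mul,
      Complex.norm_natCast]
    ring
  rw [hnorm]
  gcongr
  exact le_mul_of_one_le_right (Nat.cast_nonneg _) hn

theorem hasSum_J0coeff (u : ℂ) : HasSum (J0coeff u) (J0c u) :=
  (summable_norm_J0coeff u).of_norm.hasSum

theorem mul_J0coeff_mul_j1coeff_mul_beta (a b x : ℂ) (j m : ℕ) :
    x * (J0coeff (a * x) j * j1coeff b x m * (j ! * m ! / (j + m + 1)! : ℂ))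
      = (-1) ^ (j + m) * x ^ (j + m + 1) / ((j + m + 1)! : ℂ) ^ 2
        * ((j + m + 1).choose j * a ^ j * b ^ (m + 1)) := by
  have hchoose : ((j + m + 1).choose j : ℂ) = (j + m + 1)! / (j ! * (m + 1)!) := by
    rw [show j + m + 1 = j + (m + 1) by ring, Nat.cast_add_choose]
  have hj : (j ! : ℂ) ≠ 0 := Nat.cast_ne_zero.2 (factorial_ne_zero j)
  have hm : (m ! : ℂ) ≠ 0 := Nat.cast_ne_zero.2 (factorial_ne_zero m)
  have hm1 : ((m + 1)! : ℂ) ≠ 0 := Nat.cast_ne_zero.2 (factorial_ne_zero _)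
  have hK : ((j + m + 1)! : ℂ) ≠ 0 := Nat.cast_ne_zero.2 (factorial_ne_zero _)
  simp only [J0coeff, j1coeff, hchoose]
  field_simp
  ring

theorem sum_antidiagonal_J0coeff_mul_j1coeff (a b x : ℂ) (K : ℕ) :
    ∑ p ∈ antidiagonal K, x * (J0coeff (a * x) p.1 * j1coeff b x p.2
      * (p.1 ! * p.2 ! / (p.1 + p.2 + 1)! : ℂ))
      = J0coeff (a * x) (K + 1) - J0coeff ((a + b) * x) (K + 1) := by
  have hterm : ∀ p ∈ antidiagonal K,
      x * (J0coeff (a * x) p.1 * j1coeff b x p.2 * (p.1 ! * p.2 ! / (p.1 + p.2 + 1)! : ℂ))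
        = (-1) ^ K * x ^ (K + 1) / ((K + 1)! : ℂ) ^ 2
          * ((K + 1).choose p.1 * a ^ p.1 * b ^ (p.2 + 1)) := by
    intro p hp
    rw [mul_J0coeff_mul_j1coeff_mul_beta, mem_antidiagonal.1 hp]
  rw [sum_congr rfl hterm, ← mul_sum, ← add_pow_succ_sub_pow_succ]
  simp only [J0coeff, mul_pow, pow_succ (-1 : ℂ)]
  ring

/-- `J₀(2√((a+b)x)) = J₀(2√(ax)) − ∫₀ˣ J₀(2√(ay)) b J₁(2√(b(x−y)))/√(b(x−y)) dy`,
the integral over the segment from `0` to `x` being parametrized by `y = t·x`, `t ∈ [0,1]`. -/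
theorem J0_shift_formula (a b x : ℂ) :
    J0c ((a + b) * x)
      = J0c (a * x) - x * ∫ t in (0:ℝ)..1, J0c (a * (t * x)) * j1c b ((1 - t) * x) := by
  have hintegrand (t : ℝ) : J0c (a * (t * x)) * j1c b ((1 - t) * x)
      = (∑' n, J0coeff (a * x) n * (t : ℂ) ^ n) * ∑' m, j1coeff b x m * (1 - (t : ℂ)) ^ m := by
    rw [← J0c_mul, ← j1c_mul, mul_left_comm, mul_comm (t : ℂ)]
  have hseries := ((hasSum_integral_tsum_mul_pow_mul_tsum_mul_one_sub_pow
    (summable_norm_J0coeff (a * x)) (summable_norm_j1coeff b x)).mul_left x).sum_antidiagonal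
  simp only [sum_antidiagonal_J0coeff_mul_j1coeff, ← hintegrand] at hseries
  have hdiff := (hasSum_J0coeff (a * x)).sub (hasSum_J0coeff ((a + b) * x))
  rw [← hasSum_nat_add_iff' 1] at hdiff
  simp only [range_one, sum_singleton, J0coeff_zero, sub_self, sub_zero] at hdiff
  linear_combination hseries.unique hdiff
end

section
/- For all b and x: I_0(2√(b(b−a))) evaluated at a = x satisfies I_0(2√(b(b−x))) = J_0(2√(bx)) + ∫_0^b J_0(2√(xy)) · (b I_1(2√(b(b−y)))/√(b(b−y))) dy, as an identity of entire functions of (b,x). -/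
open MeasureTheory

/-- `I0c u = I₀(2√u) = ∑ uⁿ/(n!)²` (entire). -/
noncomputable def I0c (u : ℂ) : ℂ := ∑' n : ℕ, u^n / ((Nat.factorial n : ℂ))^2

/-- `i1c b u = b I₁(2√(bu))/√(bu) = ∑ bⁿ⁺¹ uⁿ/(n!(n+1)!)` (entire). -/
noncomputable def i1c (b u : ℂ) : ℂ :=
  ∑' n : ℕ, b^(n+1) * u^n / ((Nat.factorial n : ℂ) * (Nat.factorial (n+1) : ℂ))

/-!
Put `u = -bx` and `v = b²`, so that `b(b - x) = u + v`. Expanding `(u + v)ᵏ` binomially turns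
`I₀(2√(u + v))` into the absolutely convergent double series `∑ uʲ vⁱ / (j! i! (i + j)!)`, whose
`i = 0` slice is `I₀(2√u) = J₀(2√(bx))`. In the integral, the product of the series of `J₀` in `t`
and of `I₁` in `1 - t` can be integrated termwise, and the Beta integral
`∫₀¹ tᵐ (1 - t)ⁿ dt = m! n! / (m + n + 1)!` turns it into exactly the `i ≥ 1` slice.
-/

open Finset Nat

theorem intervalIntegral_pow_mul_one_sub_pow (m n : ℕ) :
    ∫ t in (0:ℝ)..1, (t : ℂ) ^ m * (1 - (t : ℂ)) ^ n = m ! * n ! / (m + n + 1)! := by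
  have hpos : ∀ k : ℕ, 0 < ((k : ℂ) + 1).re := fun k => by simp; positivity
  have hbeta := Complex.betaIntegral_eq_Gamma_mul_div _ _ (hpos m) (hpos n)
  rw [show (m : ℂ) + 1 + (n + 1) = ((m + n + 1 : ℕ) : ℂ) + 1 by push_cast; ring,
    Complex.Gamma_nat_eq_factorial, Complex.Gamma_nat_eq_factorial,
    Complex.Gamma_nat_eq_factorial, Complex.betaIntegral] at hbeta
  simpa only [add_sub_cancel_right, Complex.cpow_natCast] using hbeta

theorem Summable.tsum_prod_eq_tsum_sum_antidiagonal {A α : Type*} [AddCommMonoid A]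
    [HasAntidiagonal A] [AddCommMonoid α] [TopologicalSpace α] [ContinuousAdd α] [T3Space α]
    {f : A × A → α} (hf : Summable f) :
    ∑' p, f p = ∑' n, ∑ p ∈ antidiagonal n, f p := by
  conv_rhs => congr; ext; rw [← Finset.sum_finset_coe, ← tsum_fintype (L := .unconditional _)]
  rw [← HasAntidiagonal.sigmaAntidiagonalEquivProd.tsum_eq f]
  exact Summable.tsum_sigma' (fun n => (hasSum_fintype _).summable)
    (HasAntidiagonal.sigmaAntidiagonalEquivProd.summable_iff.mpr hf)

theorem Summable.tsum_prod_eq_tsum_add_tsum_succ_snd {E : Type*} [NormedAddCommGroup E]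
    [CompleteSpace E] {f : ℕ × ℕ → E} (hf : Summable f) :
    ∑' p, f p = ∑' j, f (j, 0) + ∑' p : ℕ × ℕ, f (p.1, p.2 + 1) := by
  have hsucc : Summable fun p : ℕ × ℕ => f (p.1, p.2 + 1) :=
    hf.comp_injective fun p q h => by
      simp only [Prod.mk.injEq, Nat.add_right_cancel_iff] at h; exact Prod.ext h.1 h.2
  have hzero : Summable fun j => f (j, 0) := hf.comp_injective fun i j h => (Prod.mk.inj h).1
  calc ∑' p, f p = ∑' j, ∑' i, f (j, i) := hf.tsum_prod
    _ = ∑' j, (f (j, 0) + ∑' i, f (j, i + 1)) :=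
        tsum_congr fun j => (hf.prod_factor j).tsum_eq_zero_add
    _ = _ := by rw [hzero.tsum_add hsucc.prod, hsucc.tsum_prod]

theorem Summable.norm_mul_pow {𝕜 : Type*} [NormedDivisionRing 𝕜] {a : ℕ → 𝕜}
    (ha : Summable (‖a ·‖)) {z : 𝕜} (hz : ‖z‖ ≤ 1) : Summable fun n => ‖a n * z ^ n‖ :=
  ha.of_nonneg_of_le (fun _ => norm_nonneg _) fun n => by
    rw [norm_mul, norm_pow]
    exact mul_le_of_le_one_right (norm_nonneg _) (pow_le_one₀ (norm_nonneg _) hz)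

theorem intervalIntegral_tsum_pow_mul_tsum_one_sub_pow {a c : ℕ → ℂ}
    (ha : Summable (‖a ·‖)) (hc : Summable (‖c ·‖)) :
    ∫ t in (0:ℝ)..1, (∑' m, a m * (t : ℂ) ^ m) * ∑' n, c n * (1 - (t : ℂ)) ^ n
      = ∑' p : ℕ × ℕ, a p.1 * c p.2 * (p.1 ! * p.2 ! / (p.1 + p.2 + 1)!) := by
  have hunit : ∀ t ∈ Set.uIoc (0:ℝ) 1, ‖(t : ℂ)‖ ≤ 1 ∧ ‖1 - (t : ℂ)‖ ≤ 1 := by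
    intro t ht
    rw [Set.uIoc_of_le zero_le_one] at ht
    rw [← Complex.ofReal_one, ← Complex.ofReal_sub, Complex.norm_real, Complex.norm_real,
      Real.norm_of_nonneg ht.1.le, Real.norm_of_nonneg (sub_nonneg.2 ht.2)]
    constructor <;> linarith [ht.1, ht.2]
  have hsum := intervalIntegral.hasSum_integral_of_dominated_convergence
    (F := fun (p : ℕ × ℕ) (t : ℝ) => a p.1 * (t : ℂ) ^ p.1 * (c p.2 * (1 - (t : ℂ)) ^ p.2))
    (μ := volume) (f := fun t : ℝ => (∑' m, a m * (t : ℂ) ^ m) * ∑' n, c n * (1 - (t : ℂ)) ^ n)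
    (fun p _ => ‖a p.1‖ * ‖c p.2‖)
    (fun p => by fun_prop)
    (fun p => Filter.Eventually.of_forall fun t ht => by
      rw [norm_mul, norm_mul, norm_mul, norm_pow, norm_pow]
      exact mul_le_mul (mul_le_of_le_one_right (norm_nonneg _)
          (pow_le_one₀ (norm_nonneg _) (hunit t ht).1))
        (mul_le_of_le_one_right (norm_nonneg _) (pow_le_one₀ (norm_nonneg _) (hunit t ht).2))
        (by positivity) (norm_nonneg _))
    (Filter.Eventually.of_forall fun t _ =>
      ha.mul_of_nonneg hc (fun _ => norm_nonneg _) fun _ => norm_nonneg _)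
    intervalIntegrable_const
    (Filter.Eventually.of_forall fun t ht => by
      have h1 := ha.norm_mul_pow (hunit t ht).1
      have h2 := hc.norm_mul_pow (hunit t ht).2
      rw [tsum_mul_tsum_of_summable_norm h1 h2]
      exact (summable_mul_of_summable_norm h1 h2).hasSum)
  rw [← hsum.tsum_eq]
  refine tsum_congr fun p => ?_
  simp_rw [mul_mul_mul_comm (a p.1), intervalIntegral.integral_const_mul,
    intervalIntegral_pow_mul_one_sub_pow]

theorem norm_div_mul_factorial_le (z w : ℂ) (n : ℕ) : ‖z / (w * n !)‖ ≤ ‖z / w‖ := by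
  rw [← div_div, norm_div, Complex.norm_natCast]
  exact div_le_self (norm_nonneg _) (by exact_mod_cast n.factorial_pos)

theorem summable_norm_pow_div_factorial (u : ℂ) : Summable fun n => ‖u ^ n / (n ! : ℂ)‖ := by
  simpa only [norm_div, norm_pow, Complex.norm_natCast] using
    Real.summable_pow_div_factorial ‖u‖

theorem summable_norm_pow_div_factorial_sq (u : ℂ) :
    Summable fun n => ‖u ^ n / (n ! : ℂ) ^ 2‖ :=
  (summable_norm_pow_div_factorial u).of_nonneg_of_le (fun _ => norm_nonneg _) fun n => by
    simpa only [sq] using norm_div_mul_factorial_le (u ^ n) (n ! : ℂ) n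

theorem summable_norm_i1c_coeff (b w : ℂ) :
    Summable fun n => ‖b ^ (n + 1) * w ^ n / (n ! * (n + 1)! : ℂ)‖ :=
  ((summable_norm_pow_div_factorial (b * w)).mul_left ‖b‖).of_nonneg_of_le
    (fun _ => norm_nonneg _) fun n => by
      rw [show b ^ (n + 1) * w ^ n = b * (b * w) ^ n by ring, mul_div_assoc, norm_mul]
      exact mul_le_mul_of_nonneg_left (norm_div_mul_factorial_le _ _ _) (norm_nonneg _)

noncomputable def I0cAddTerm (u v : ℂ) (p : ℕ × ℕ) : ℂ :=
  u ^ p.1 * v ^ p.2 / (p.1 ! * p.2 ! * (p.1 + p.2)!)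

theorem summable_I0cAddTerm (u v : ℂ) : Summable (I0cAddTerm u v) := by
  refine Summable.of_norm_bounded ((summable_norm_pow_div_factorial u).mul_of_nonneg
    (summable_norm_pow_div_factorial v) (fun _ => norm_nonneg _) fun _ => norm_nonneg _) ?_
  rintro ⟨j, i⟩
  calc ‖I0cAddTerm u v (j, i)‖ ≤ ‖u ^ j * v ^ i / ((j ! : ℂ) * (i ! : ℂ))‖ :=
        norm_div_mul_factorial_le _ _ _
    _ = ‖u ^ j / (j ! : ℂ)‖ * ‖v ^ i / (i ! : ℂ)‖ := by rw [mul_div_mul_comm, norm_mul]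

theorem I0c_add (u v : ℂ) : I0c (u + v) = ∑' p, I0cAddTerm u v p := by
  rw [(summable_I0cAddTerm u v).tsum_prod_eq_tsum_sum_antidiagonal, I0c]
  refine tsum_congr fun k => ?_
  rw [(Commute.all u v).add_pow', Finset.sum_div]
  refine Finset.sum_congr rfl fun p hp => ?_
  rw [HasAntidiagonal.mem_antidiagonal] at hp
  subst hp
  rw [I0cAddTerm, nsmul_eq_mul, Nat.cast_add_choose]
  field_simp

theorem tsum_I0cAddTerm_snd_zero (u v : ℂ) : ∑' j, I0cAddTerm u v (j, 0) = I0c u :=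
  tsum_congr fun j => by simp [I0cAddTerm, sq]

theorem J0c_eq_I0c_neg (u : ℂ) : J0c u = I0c (-u) :=
  tsum_congr fun n => by rw [neg_pow u]

theorem I0c_mul (u z : ℂ) : I0c (u * z) = ∑' n, u ^ n / (n ! : ℂ) ^ 2 * z ^ n :=
  tsum_congr fun n => by rw [mul_pow, div_mul_eq_mul_div, mul_div_assoc]

theorem i1c_mul (b w z : ℂ) :
    i1c b (w * z) = ∑' n, b ^ (n + 1) * w ^ n / (n ! * (n + 1)! : ℂ) * z ^ n :=
  tsum_congr fun n => by ring

theorem mul_intervalIntegral_J0c_mul_i1c (b x : ℂ) :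
    b * ∫ t in (0:ℝ)..1, J0c (x * (t * b)) * i1c b (b - t * b)
      = ∑' p : ℕ × ℕ, I0cAddTerm (-(b * x)) (b ^ 2) (p.1, p.2 + 1) := by
  have hJ (t : ℝ) : J0c (x * (t * b)) = ∑' m, (-(b * x)) ^ m / (m ! : ℂ) ^ 2 * (t : ℂ) ^ m := by
    rw [J0c_eq_I0c_neg, ← I0c_mul]; congr 1; ring
  have hi (t : ℝ) : i1c b (b - t * b)
      = ∑' n, b ^ (n + 1) * b ^ n / (n ! * (n + 1)! : ℂ) * (1 - (t : ℂ)) ^ n := by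
    rw [← i1c_mul]; congr 1; ring
  simp_rw [hJ, hi, intervalIntegral_tsum_pow_mul_tsum_one_sub_pow
    (summable_norm_pow_div_factorial_sq _) (summable_norm_i1c_coeff b b), ← tsum_mul_left]
  refine tsum_congr fun p => ?_
  have hp2 : (p.2 ! : ℂ) ≠ 0 := by exact_mod_cast factorial_ne_zero _
  rw [I0cAddTerm, show p.1 + (p.2 + 1) = p.1 + p.2 + 1 by ring]
  field_simp
  ring

/-- `I₀(2√(b(b−x))) = J₀(2√(bx)) + ∫₀ᵇ J₀(2√(xy)) · b I₁(2√(b(b−y)))/√(b(b−y)) dy`,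
the integral over the segment from `0` to `b` being parametrized by `y = t·b`, `t ∈ [0,1]`. -/
theorem I0_integral_equation (b x : ℂ) :
    I0c (b * (b - x))
      = J0c (b * x) + b * ∫ t in (0:ℝ)..1, J0c (x * (t * b)) * i1c b (b - t * b) := by
  have hsplit := (summable_I0cAddTerm (-(b * x)) (b ^ 2)).tsum_prod_eq_tsum_add_tsum_succ_snd
  rw [show b * (b - x) = -(b * x) + b ^ 2 by ring, I0c_add, hsplit, tsum_I0cAddTerm_snd_zero,
    J0c_eq_I0c_neg, mul_intervalIntegral_J0c_mul_i1c]
end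

section
/- Let P_n be defined recursively by P_0(x) = 1 and P_{n+1}(x) = P_n(x) − 2∫_0^x P_n(y) dy. Then P_n(x) = ∑_{j=0}^n C(n,j) (−2x)^j / j!, i.e. P_n(x) = L_n(2x) where L_n is the n-th Laguerre polynomial. -/
/-! Termwise integration turns the classical identity `∫₀ˣ Lₙ = Lₙ(x) - Lₙ₊₁(x)` into Pascal's
rule `C(n+1, j+1) = C(n, j) + C(n, j+1)`; after the substitution `y ↦ 2y` it is exactly the
recursion defining `P`, so `Pₙ(x) = Lₙ(2x)`. -/

open MeasureTheory

/-- `P 0 = 1`, `P (n+1) x = P n x − 2∫₀ˣ P n y dy`. -/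
noncomputable def P : ℕ → ℝ → ℝ
  | 0 => fun _ => 1
  | n + 1 => fun x => P n x - 2 * ∫ y in (0:ℝ)..x, P n y

open Finset Nat

noncomputable def laguerre (n : ℕ) (x : ℝ) : ℝ :=
  ∑ j ∈ range (n + 1), (n.choose j : ℝ) * (-x) ^ j / j !

theorem laguerre_succ (n : ℕ) (x : ℝ) :
    laguerre (n + 1) x =
      laguerre n x + ∑ j ∈ range (n + 1), (n.choose j : ℝ) * (-x) ^ (j + 1) / (j + 1)! := by
  have hshift : ∑ j ∈ range (n + 1), (n.choose (j + 1) : ℝ) * (-x) ^ (j + 1) / (j + 1)! =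
      laguerre n x - 1 := by
    rw [sum_range_succ, choose_succ_self, laguerre, sum_range_succ']
    simp
  rw [laguerre, sum_range_succ', sum_congr rfl fun j _ => by
    rw [choose_succ_succ', cast_add, add_mul, add_div], sum_add_distrib, hshift]
  simp only [choose_zero_right, cast_one, pow_zero, mul_one, factorial_zero, div_one]
  ring

theorem integral_neg_pow_div_factorial (j : ℕ) (x : ℝ) :
    ∫ y in (0 : ℝ)..x, (-y) ^ j / j ! = -((-x) ^ (j + 1) / (j + 1)!) := by
  rw [intervalIntegral.integral_div, intervalIntegral.integral_comp_neg (fun y => y ^ j),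
    integral_pow, factorial_succ, cast_mul]
  field_simp
  simp

theorem integral_laguerre (n : ℕ) (x : ℝ) :
    ∫ y in (0 : ℝ)..x, laguerre n y =
      -∑ j ∈ range (n + 1), (n.choose j : ℝ) * (-x) ^ (j + 1) / (j + 1)! := by
  unfold laguerre
  rw [intervalIntegral.integral_finsetSum fun j _ =>
    (by fun_prop : Continuous _).intervalIntegrable _ _, ← sum_neg_distrib]
  refine sum_congr rfl fun j _ => ?_
  simp only [mul_div_assoc, intervalIntegral.integral_const_mul, integral_neg_pow_div_factorial,
    mul_neg]

theorem laguerre_succ_eq_sub_integral (n : ℕ) (x : ℝ) :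
    laguerre (n + 1) x = laguerre n x - ∫ y in (0 : ℝ)..x, laguerre n y := by
  rw [laguerre_succ, integral_laguerre, sub_neg_eq_add]

theorem P_eq_laguerre_two_mul (n : ℕ) (x : ℝ) : P n x = laguerre n (2 * x) := by
  induction n generalizing x with
  | zero => simp [P, laguerre]
  | succ n ih =>
    have hsubst :
        2 * ∫ y in (0 : ℝ)..x, laguerre n (2 * y) = ∫ y in (0 : ℝ)..2 * x, laguerre n y := by
      rw [← smul_eq_mul, intervalIntegral.smul_integral_comp_mul_left, mul_zero]
    simp only [P, ih, hsubst, laguerre_succ_eq_sub_integral]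

theorem P_eq_laguerre (n : ℕ) (x : ℝ) :
    P n x = ∑ j ∈ Finset.range (n + 1),
      (n.choose j : ℝ) * (-2 * x)^j / (Nat.factorial j : ℝ) := by
  simp only [P_eq_laguerre_two_mul, laguerre, neg_mul]
end
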